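/- Let K be a field, let n ≥ 2 and 2 ≤ m ≤ n. In the polynomial ring R = MvPolynomial (Fin n) K, the ideal J generated by the m monomials ∏_{j<m, j≠i} X_j (for i < m) is a radical ideal. -/

import Mathlib

/-!
A monomial lies in `J` iff it is divisible by all but at most one of the variables `X j`,
`j < m`, i.e. iff it lies in every ideal `(X a, X b)` with `a ≠ b` both below `m`. As both `J` and these
ideals are spanned by monomials, `J` is their intersection. Each `(X a, X b)` is prime, being the
kernel of the substitution `X a, X b ↦ 0` into the domain `MvPolynomial σ R`, so `J` is radical.
-/

open MvPolynomial

lemma exists_forall_mem_erase_ne_zero {σ M : Type*} [DecidableEq σ] [Zero M] {S : Finset σ}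
    {f : σ → M} (hS : S.Nonempty) (h : ∀ a ∈ S, ∀ b ∈ S, a ≠ b → f a ≠ 0 ∨ f b ≠ 0) :
    ∃ i ∈ S, ∀ j ∈ S.erase i, f j ≠ 0 := by
  by_cases hzero : ∃ i ∈ S, f i = 0
  · obtain ⟨i, hi, hfi⟩ := hzero
    refine ⟨i, hi, fun j hj => ?_⟩
    obtain ⟨hji, hj⟩ := Finset.mem_erase.1 hj
    simpa [hfi] using h j hj i hi hji
  · push Not at hzero
    obtain ⟨i, hi⟩ := hS
    exact ⟨i, hi, fun j hj => hzero j (Finset.mem_of_mem_erase hj)⟩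

lemma Finsupp.sum_single_one_le_iff {σ : Type*} [DecidableEq σ] (T : Finset σ) (d : σ →₀ ℕ) :
    ∑ j ∈ T, Finsupp.single j 1 ≤ d ↔ ∀ j ∈ T, d j ≠ 0 := by
  simp only [Finsupp.le_def, Finsupp.finsetSum_apply, Finsupp.single_apply, Finset.sum_ite_eq']
  refine ⟨fun h j hj => ?_, fun h j => ?_⟩
  · simpa [hj, Nat.one_le_iff_ne_zero] using h j
  · split_ifs with hj
    · exact Nat.one_le_iff_ne_zero.2 (h j hj)
    · exact Nat.zero_le _

namespace MvPolynomial

variable {σ R : Type*}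

lemma prod_X_eq_monomial [CommSemiring R] (T : Finset σ) :
    ∏ j ∈ T, (X j : MvPolynomial σ R) = monomial (∑ j ∈ T, Finsupp.single j 1) 1 :=
  (monomial_sum_one T _).symm

lemma span_X_image_eq_ker_aeval [CommRing R] (s : Set σ) [DecidablePred (· ∈ s)] :
    Ideal.span (X '' s : Set (MvPolynomial σ R)) =
      RingHom.ker
        (aeval fun j => if j ∈ s then 0 else X j : MvPolynomial σ R →ₐ[R] MvPolynomial σ R) := by
  set I := Ideal.span (X '' s : Set (MvPolynomial σ R))
  set φ : MvPolynomial σ R →ₐ[R] MvPolynomial σ R := aeval fun j => if j ∈ s then 0 else X j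
  -- `φ` only kills variables lying in `I`, so it is the identity modulo `I`.
  have hφ : (Ideal.Quotient.mkₐ R I).comp φ = Ideal.Quotient.mkₐ R I := by
    refine algHom_ext fun j => ?_
    by_cases hj : j ∈ s
    · have hXj : X j ∈ I := Ideal.subset_span ⟨j, hj, rfl⟩
      simpa [φ, hj, eq_comm (a := (0 : _ ⧸ I)), Ideal.Quotient.eq_zero_iff_mem] using hXj
    · simp [φ, hj]
  refine le_antisymm (Ideal.span_le.2 ?_) fun x hx => ?_
  · rintro _ ⟨j, hj, rfl⟩
    simp [φ, hj]
  · have := congrArg (· x) hφ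
    simp only [AlgHom.comp_apply, Ideal.Quotient.mkₐ_eq_mk, RingHom.mem_ker.1 hx, map_zero] at this
    exact Ideal.Quotient.eq_zero_iff_mem.1 this.symm

lemma isPrime_span_X_image [CommRing R] [IsDomain R] (s : Set σ) :
    (Ideal.span (X '' s : Set (MvPolynomial σ R))).IsPrime := by
  classical
  rw [span_X_image_eq_ker_aeval]
  exact RingHom.ker_isPrime _

noncomputable def normalCrossingJacobianIdeal [CommSemiring R] [DecidableEq σ] (S : Finset σ) :
    Ideal (MvPolynomial σ R) :=
  Ideal.span ((fun i => ∏ j ∈ S.erase i, X j) '' S)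

variable [DecidableEq σ]

lemma normalCrossingJacobianIdeal_eq_iInf [CommSemiring R] {S : Finset σ} (hS : S.Nonempty) :
    normalCrossingJacobianIdeal (R := R) S =
      ⨅ a ∈ S, ⨅ b ∈ S, ⨅ (_ : a ≠ b), Ideal.span (X '' {a, b}) := by
  refine le_antisymm ?_ fun x hx => ?_
  · simp only [le_iInf_iff, normalCrossingJacobianIdeal, Ideal.span_le]
    rintro a ha b hb hab _ ⟨i, -, rfl⟩
    obtain ⟨c, hci, hcab⟩ : ∃ c ∈ S.erase i, c ∈ ({a, b} : Set σ) := by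
      by_cases hai : a = i
      · exact ⟨b, Finset.mem_erase.2 ⟨hai ▸ hab.symm, hb⟩, by simp⟩
      · exact ⟨a, Finset.mem_erase.2 ⟨hai, ha⟩, by simp⟩
    exact Ideal.mem_of_dvd _ (Finset.dvd_prod_of_mem X hci) (Ideal.subset_span ⟨c, hcab, rfl⟩)
  · simp only [Ideal.mem_iInf] at hx
    simp only [normalCrossingJacobianIdeal, prod_X_eq_monomial]
    rw [← Set.image_image (fun d => monomial d (1 : R)), mem_ideal_span_monomial_image]
    intro d hd
    have hpair : ∀ a ∈ S, ∀ b ∈ S, a ≠ b → d a ≠ 0 ∨ d b ≠ 0 := fun a ha b hb hab => by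
      simpa using mem_ideal_span_X_image.1 (hx a ha b hb hab) d hd
    obtain ⟨i, hi, hdi⟩ := exists_forall_mem_erase_ne_zero hS hpair
    exact ⟨_, ⟨i, hi, rfl⟩, (Finsupp.sum_single_one_le_iff _ d).2 hdi⟩

theorem isRadical_normalCrossingJacobianIdeal [CommRing R] [IsDomain R] (S : Finset σ) :
    (normalCrossingJacobianIdeal (R := R) S).IsRadical := by
  rcases S.eq_empty_or_nonempty with rfl | hS
  · simpa [normalCrossingJacobianIdeal] using Ideal.isRadical_bot
  rw [normalCrossingJacobianIdeal_eq_iInf hS]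
  exact Ideal.isRadical_iInf _ fun a => Ideal.isRadical_iInf _ fun _ =>
    Ideal.isRadical_iInf _ fun b => Ideal.isRadical_iInf _ fun _ =>
      Ideal.isRadical_iInf _ fun _ => (isPrime_span_X_image _).isRadical

end MvPolynomial

theorem jacobian_ideal_of_normal_crossing_isRadical_general
    (K : Type*) [Field K] (n m : ℕ) :
    (Ideal.span { q : MvPolynomial (Fin n) K | ∃ i : Fin n, (i : ℕ) < m ∧
        q = ∏ j ∈ Finset.univ.filter (fun j : Fin n => (j : ℕ) < m ∧ j ≠ i), X j }).IsRadical := by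
  set S := Finset.univ.filter fun j : Fin n => (j : ℕ) < m
  have hfilter (i : Fin n) :
      Finset.univ.filter (fun j : Fin n => (j : ℕ) < m ∧ j ≠ i) = S.erase i := by
    ext j
    simp [S, and_comm]
  convert isRadical_normalCrossingJacobianIdeal (R := K) S using 2
  rw [normalCrossingJacobianIdeal]
  congr 1
  ext q
  simp only [hfilter]
  simp [S, eq_comm]

/-- In `MvPolynomial (Fin n) K`, the ideal generated by the `m` monomials
`∏_{j < m, j ≠ i} X j` (for `i < m`), i.e. the Jacobian ideal of the normal
crossing polynomial `X 0 * ⋯ * X (m-1)`, is a radical ideal. -/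
theorem jacobian_ideal_of_normal_crossing_isRadical
    (K : Type*) [Field K] (n m : ℕ) (hn : 2 ≤ n) (hm2 : 2 ≤ m) (hmn : m ≤ n) :
    (Ideal.span { q : MvPolynomial (Fin n) K | ∃ i : Fin n, (i : ℕ) < m ∧
        q = ∏ j ∈ Finset.univ.filter (fun j : Fin n => (j : ℕ) < m ∧ j ≠ i), X j }).IsRadical :=
  jacobian_ideal_of_normal_crossing_isRadical_general K n m
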